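/- arXiv:math/9707231 — 6 statements merged into one kernel-verified Lean document; each statement's English description precedes it below -/
import Mathlib

section
/- For every integer l ≥ 1 there exists a sentence φ_l in the first-order language of rings such that, for every commutative ring R (regarded as a structure for the language of rings in the canonical way), R satisfies φ_l if and only if R is an Artinian local ring whose length is at most l. Likewise, there exists a sentence φ'_l whose models among commutative rings are exactly the Artinian local rings of length exactly l. -/
/-!
The length of `R` is the Krull dimension of its lattice of ideals, so `n ≤ ℓ(R)` iff there are
`x₀, …, xₙ₋₁ ∈ R` with `xₖ ∉ (x₀, …, xₖ₋₁)` for every `k`: such elements make the ideals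
`(x₀, …, xⱼ₋₁)` a strict chain, and conversely `xₖ` can be picked in `Iₖ₊₁ \ Iₖ` along a strict
chain `I₀ < ⋯ < Iₙ`. Membership in a finitely generated ideal asks for coefficients, so this is an
existential first-order condition. Being local is `0 ≠ 1 ∧ ∀ a, a or 1 - a is a unit`, and finite
length already forces `R` to be Artinian. So `φ_l` says "local, and no such `x₀, …, x_l`", and
`φ'_l` adds "some such `x₀, …, xₗ₋₁`".
-/

open FirstOrder Language

/-- The length of a commutative ring as a module over itself, i.e. the supremum of the
lengths of strictly increasing chains of ideals (Krull dimension of the ideal lattice). -/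
noncomputable def ringLength (R : Type*) [CommRing R] : WithBot ℕ∞ :=
  Order.krullDim (Ideal R)

open Submodule in
theorem exists_notMem_span_image_Iio_iff_le_krullDim {R M : Type*} [Semiring R]
    [AddCommMonoid M] [Module R M] {n : ℕ} :
    (∃ x : Fin n → M, ∀ k, x k ∉ span R (x '' Set.Iio k)) ↔
      (n : WithBot ℕ∞) ≤ Order.krullDim (Submodule R M) := by
  rw [Order.le_krullDim_iff]
  constructor
  · rintro ⟨x, hx⟩
    let p : Fin (n + 1) → Submodule R M := fun j => span R (x '' {i | (i : ℕ) < j})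
    have hp : ∀ k : Fin n, p k.castSucc = span R (x '' Set.Iio k) := fun _ => rfl
    refine ⟨LTSeries.mk n p (Fin.strictMono_iff_lt_succ.2 fun k =>
      SetLike.lt_iff_le_and_exists.2 ⟨?_, x k, ?_, ?_⟩), rfl⟩
    · exact span_mono (Set.image_mono fun _ hi => Nat.lt_succ_of_lt hi)
    · exact subset_span ⟨k, Nat.lt_succ_self _, rfl⟩
    · rw [hp]; exact hx k
  · rintro ⟨p, rfl⟩
    choose x hx_mem hx_notMem using fun k : Fin p.length =>
      SetLike.exists_of_lt (p.strictMono k.castSucc_lt_succ)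
    refine ⟨x, fun k hk => hx_notMem k (span_le.2 ?_ hk)⟩
    rintro _ ⟨i, hi, rfl⟩
    exact p.monotone (Fin.succ_le_castSucc_iff.2 hi) (hx_mem i)

theorem isLocalRing_iff_zero_ne_one_and_isUnit_or_isUnit_one_sub_self {R : Type*}
    [CommRing R] : IsLocalRing R ↔ (0 : R) ≠ 1 ∧ ∀ a : R, IsUnit a ∨ IsUnit (1 - a) :=
  ⟨fun _ => ⟨zero_ne_one, IsLocalRing.isUnit_or_isUnit_one_sub_self⟩,
    fun ⟨h01, h⟩ => have := nontrivial_of_ne 0 1 h01; .of_isUnit_or_isUnit_one_sub_self h⟩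

section ringLength

variable {R : Type*} [CommRing R]

theorem ringLength_eq_length : ringLength R = Module.length R R :=
  (Module.coe_length R R).symm

theorem IsArtinianRing.of_ringLength_le {n : ℕ} (h : ringLength R ≤ n) : IsArtinianRing R := by
  rw [ringLength_eq_length, ← WithBot.coe_natCast, WithBot.coe_le_coe] at h
  have : IsFiniteLength R R := Module.length_ne_top_iff.1 (ne_top_of_le_ne_top (by simp) h)
  exact (isFiniteLength_iff_isNoetherian_isArtinian.1 this).2

end ringLength

namespace FirstOrder.Ring

open FreeCommRing

noncomputable def memSpanFormula {ι : Type*} (s : Finset ι) (i : ι) : Language.ring.Formula ι :=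
  Formula.iExs s <| Term.equal (Term.var (Sum.inl i))
    (termOfFreeCommRing (∑ j : s, of (Sum.inr j) * of (Sum.inl (j : ι))))

noncomputable def lengthGESentence (n : ℕ) : Language.ring.Sentence :=
  (BoundedFormula.relabel Sum.inr
    (Formula.iInf fun k : Fin n => ∼(memSpanFormula (Finset.Iio k) k))).exs

noncomputable def localSentence : Language.ring.Sentence :=
  ∼((0 : Language.ring.Term _) =' 1) ⊓ ∀' (∃' ((&0 * &1) =' 1) ⊔ ∃' (((1 + -&0) * &1) =' 1))

noncomputable def localLengthLESentence (l : ℕ) : Language.ring.Sentence :=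
  localSentence ⊓ ∼(lengthGESentence (l + 1))

noncomputable def localLengthEqSentence (l : ℕ) : Language.ring.Sentence :=
  localLengthLESentence l ⊓ lengthGESentence l

variable {R : Type*} [CommRing R] [CompatibleRing R]

theorem realize_memSpanFormula {ι : Type*} (s : Finset ι) (i : ι) (x : ι → R) :
    (memSpanFormula s i).Realize x ↔ x i ∈ Ideal.span (x '' s) := by
  rw [Set.image_eq_range, Ideal.mem_span_range_iff_exists_fun]
  simp [memSpanFormula, eq_comm]

theorem realize_lengthGESentence (n : ℕ) :
    R ⊨ lengthGESentence n ↔ (n : WithBot ℕ∞) ≤ ringLength R := by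
  rw [ringLength, ← exists_notMem_span_image_Iio_iff_le_krullDim]
  simp only [lengthGESentence, Sentence.Realize, BoundedFormula.realize_exs,
    Formula.realize_relabel_sumInr]
  simp [realize_memSpanFormula]

theorem realize_localSentence : R ⊨ localSentence ↔ IsLocalRing R := by
  rw [isLocalRing_iff_zero_ne_one_and_isUnit_or_isUnit_one_sub_self]
  simp [localSentence, Sentence.Realize, Formula.Realize, Fin.snoc, isUnit_iff_exists_inv,
    sub_eq_add_neg]

theorem realize_localLengthLESentence (l : ℕ) :
    R ⊨ localLengthLESentence l ↔ IsArtinianRing R ∧ IsLocalRing R ∧ ringLength R ≤ l := by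
  rw [localLengthLESentence, Sentence.realize_inf, Sentence.realize_not, realize_localSentence,
    realize_lengthGESentence, not_le, Nat.cast_succ, ENat.WithBot.lt_add_one_iff]
  exact ⟨fun ⟨hloc, hlen⟩ => ⟨.of_ringLength_le hlen, hloc, hlen⟩, fun h => h.2⟩

theorem realize_localLengthEqSentence (l : ℕ) :
    R ⊨ localLengthEqSentence l ↔ IsArtinianRing R ∧ IsLocalRing R ∧ ringLength R = l := by
  rw [localLengthEqSentence, Sentence.realize_inf, realize_localLengthLESentence,
    realize_lengthGESentence]
  exact ⟨fun ⟨⟨hart, hloc, hle⟩, hge⟩ => ⟨hart, hloc, hle.antisymm hge⟩,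
    fun ⟨hart, hloc, heq⟩ => ⟨⟨hart, hloc, heq.le⟩, heq.ge⟩⟩

end FirstOrder.Ring

open FirstOrder.Ring in
theorem stmt_0_general (l : ℕ) :
    (∃ φ : Language.ring.Sentence, ∀ (R : Type*) [CommRing R],
      (letI := FirstOrder.Ring.compatibleRingOfRing R; R ⊨ φ) ↔
        (IsArtinianRing R ∧ IsLocalRing R ∧ ringLength R ≤ ((l : ℕ∞) : WithBot ℕ∞))) ∧
    (∃ φ' : Language.ring.Sentence, ∀ (R : Type*) [CommRing R],
      (letI := FirstOrder.Ring.compatibleRingOfRing R; R ⊨ φ') ↔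
        (IsArtinianRing R ∧ IsLocalRing R ∧ ringLength R = ((l : ℕ∞) : WithBot ℕ∞))) := by
  simp only [WithBot.coe_natCast]
  exact ⟨⟨localLengthLESentence l, fun R _ =>
      @realize_localLengthLESentence R _ (compatibleRingOfRing R) l⟩,
    ⟨localLengthEqSentence l, fun R _ =>
      @realize_localLengthEqSentence R _ (compatibleRingOfRing R) l⟩⟩

/-- For every `l ≥ 1` there is a first-order sentence in the language of rings whose models
among commutative rings are exactly the Artinian local rings of length at most `l`, and
likewise a sentence for the Artinian local rings of length exactly `l`. -/
theorem stmt_0 (l : ℕ) (hl : 1 ≤ l) :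
    (∃ φ : Language.ring.Sentence, ∀ (R : Type*) [CommRing R],
      (letI := FirstOrder.Ring.compatibleRingOfRing R; R ⊨ φ) ↔
        (IsArtinianRing R ∧ IsLocalRing R ∧ ringLength R ≤ ((l : ℕ∞) : WithBot ℕ∞))) ∧
    (∃ φ' : Language.ring.Sentence, ∀ (R : Type*) [CommRing R],
      (letI := FirstOrder.Ring.compatibleRingOfRing R; R ⊨ φ') ↔
        (IsArtinianRing R ∧ IsLocalRing R ∧ ringLength R = ((l : ℕ∞) : WithBot ℕ∞))) :=
  stmt_0_general l
end

section
/- Let κ be a field and let R be an Artinian local commutative ring that is a finite-dimensional κ-algebra whose structure map composed with the residue map κ → R → R/𝔪 is an isomorphism (so κ is a coefficient field of R). Let x = (x₁, …, x_μ) be a minimal system of generators of the maximal ideal 𝔪, and let ≤ be a monomial ordering on ℕ^μ. For α ∈ ℕ^μ write x^α = x₁^{α₁}···x_μ^{α_μ}, let 𝔞(α) be the ideal of R generated by all x^β with β > α, and let Δ(R, x, ≤) = {α ∈ ℕ^μ : x^α ∉ 𝔞(α)}. Then the set {x^α : α ∈ Δ(R, x, ≤)} is a basis of R as a κ-vector space.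 -/
section MoAux

variable {ι : Type*} (mo : LinearOrder ι)

lemma mo_lt_of_le_of_ne {a b : ι} (h : mo.le a b) (hne : a ≠ b) : mo.lt a b := by
  letI := mo; exact lt_of_le_of_ne h hne

lemma mo_lt_trans {a b c : ι} (h : mo.lt a b) (h' : mo.lt b c) : mo.lt a c := by
  letI := mo; exact lt_trans h h'

lemma mo_lt_of_lt_of_le {a b c : ι} (h : mo.lt a b) (h' : mo.le b c) : mo.lt a c := by
  letI := mo; exact lt_of_lt_of_le h h'

lemma mo_le_of_lt {a b : ι} (h : mo.lt a b) : mo.le a b := by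
  letI := mo; exact le_of_lt h

lemma mo_le_refl (a : ι) : mo.le a a := by letI := mo; exact le_refl a

lemma mo_lt_irrefl (a : ι) : ¬ mo.lt a a := by letI := mo; exact lt_irrefl a

lemma mo_exists_min (T : Finset ι) (hT : T.Nonempty) : ∃ a ∈ T, ∀ b ∈ T, mo.le a b := by
  letI := mo
  exact ⟨T.min' hT, T.min'_mem hT, fun b hb => T.min'_le b hb⟩

end MoAux

lemma prod_pow_mem_pow {R : Type*} [CommRing R] {μ : ℕ} (I : Ideal R) (x : Fin μ → R)
    (hx : ∀ i, x i ∈ I) (α : Fin μ → ℕ) :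
    (∏ i, x i ^ α i) ∈ I ^ (∑ i, α i) := by
  classical
  have H : ∀ s : Finset (Fin μ), (∏ i ∈ s, x i ^ α i) ∈ I ^ (∑ i ∈ s, α i) := by
    intro s
    induction s using Finset.induction with
    | empty => simp [Ideal.one_eq_top]
    | @insert a s' h ih =>
      rw [Finset.prod_insert h, Finset.sum_insert h, pow_add]
      exact Ideal.mul_mem_mul (Ideal.pow_mem_pow (hx a) _) ih
  exact H Finset.univ

/-- The ideal `𝔞(α)` generated by the monomials `x^β` in the generators `x` of the maximal
ideal, for `β > α` in a given monomial ordering. -/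
def monIdeal {R : Type u} [CommRing R] {μ : ℕ} (x : Fin μ → R)
    (mo : LinearOrder (Fin μ → ℕ)) (α : Fin μ → ℕ) : Ideal R :=
  Ideal.span {r | ∃ β, mo.lt α β ∧ r = ∏ i, x i ^ β i}

/-- `Δ(R, x, ≤)`: the set of exponents `α` such that `x^α ∉ 𝔞(α)`. -/
def monDelta {R : Type u} [CommRing R] {μ : ℕ} (x : Fin μ → R)
    (mo : LinearOrder (Fin μ → ℕ)) : Set (Fin μ → ℕ) :=
  {α | (∏ i, x i ^ α i) ∉ monIdeal x mo α}

/-- Let `R` be an Artinian local ring which is a finite-dimensional algebra over a field `κ`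
which is a coefficient field (the composite `κ → R → R/𝔪` is an isomorphism). Fix a minimal
system of generators `x = (x₁, …, x_μ)` of `𝔪` and a monomial ordering on `ℕ^μ` (a linear
order with `0` minimal and compatible with addition). Then the monomials `x^α`, for
`α ∈ Δ(R, x, ≤)`, form a `κ`-basis of `R`. -/
theorem stmt_10 (κ : Type u) [Field κ] (R : Type u) [CommRing R]
    [IsArtinianRing R] [IsLocalRing R] [Algebra κ R] [Module.Finite κ R]
    (hcoef : Function.Bijective ((IsLocalRing.residue R).comp (algebraMap κ R)))
    (μ : ℕ) (x : Fin μ → R)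
    (hgen : Ideal.span (Set.range x) = IsLocalRing.maximalIdeal R)
    (hmin : ∀ i, x i ∉ Ideal.span (x '' {j | j ≠ i}))
    (mo : LinearOrder (Fin μ → ℕ))
    (h0 : ∀ α, mo.le 0 α)
    (hadd : ∀ α β γ : Fin μ → ℕ, mo.le α β → mo.le (α + γ) (β + γ)) :
    LinearIndependent κ (fun α : monDelta x mo => ∏ i, x i ^ α.1 i) ∧
    Submodule.span κ (Set.range (fun α : monDelta x mo => ∏ i, x i ^ α.1 i)) = ⊤ := by
  classical
  constructor
  · -- linear independence
    rw [linearIndependent_iff']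
    intro s g hsum j hj
    by_contra hg
    set T := s.filter (fun a => g a ≠ 0) with hT
    have hTne : T.Nonempty := ⟨j, Finset.mem_filter.mpr ⟨hj, hg⟩⟩
    obtain ⟨α₀, hα₀T, hminT⟩ := mo_exists_min mo (T.image Subtype.val) (hTne.image _)
    obtain ⟨a₀, ha₀T, ha₀⟩ := Finset.mem_image.mp hα₀T
    have hsum' : ∑ a ∈ T, g a • (∏ i, x i ^ a.1 i) = 0 := by
      rw [← hsum]
      apply Finset.sum_filter_of_ne
      intro a _ h hga
      exact h (by rw [hga, zero_smul])
    have hiso : g a₀ • (∏ i, x i ^ a₀.1 i)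
        = - ∑ a ∈ T.erase a₀, g a • (∏ i, x i ^ a.1 i) := by
      apply eq_neg_of_add_eq_zero_left
      rw [Finset.add_sum_erase _ (fun a : monDelta x mo => g a • ∏ i, x i ^ a.1 i) ha₀T]
      exact hsum'
    have hRHS : (∑ a ∈ T.erase a₀, g a • (∏ i, x i ^ a.1 i)) ∈ monIdeal x mo a₀.1 := by
      apply Ideal.sum_mem
      intro a haT
      have hane : a ≠ a₀ := Finset.ne_of_mem_erase haT
      have hle : mo.le α₀ a.1 :=
        hminT a.1 (Finset.mem_image_of_mem _ (Finset.mem_of_mem_erase haT))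
      have hlt : mo.lt a₀.1 a.1 := by
        apply mo_lt_of_le_of_ne mo (ha₀ ▸ hle)
        intro h; exact hane (Subtype.ext h.symm)
      have hgen' : (∏ i, x i ^ a.1 i) ∈ monIdeal x mo a₀.1 :=
        Ideal.subset_span ⟨a.1, hlt, rfl⟩
      rw [Algebra.smul_def]
      exact Ideal.mul_mem_left _ _ hgen'
    have hga : g a₀ ≠ 0 := (Finset.mem_filter.mp ha₀T).2
    have hx0 : (∏ i, x i ^ a₀.1 i) ∈ monIdeal x mo a₀.1 := by
      have h1 : g a₀ • (∏ i, x i ^ a₀.1 i) ∈ monIdeal x mo a₀.1 := by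
        rw [hiso]; exact neg_mem hRHS
      have h2 : (g a₀)⁻¹ • (g a₀ • (∏ i, x i ^ a₀.1 i)) ∈ monIdeal x mo a₀.1 := by
        rw [Algebra.smul_def]
        exact Ideal.mul_mem_left _ _ h1
      rwa [inv_smul_smul₀ hga] at h2
    exact a₀.2 hx0
  · -- spanning
    set M := IsLocalRing.maximalIdeal R with hMdef
    obtain ⟨n, hn⟩ : IsNilpotent M := by
      have := IsArtinianRing.isNilpotent_jacobson_bot (R := R)
      rwa [IsLocalRing.jacobson_eq_maximalIdeal ⊥ bot_ne_top] at this
    have hxM : ∀ i, x i ∈ M := fun i => hgen ▸ Ideal.subset_span (Set.mem_range_self i)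
    have hSfin : {β : Fin μ → ℕ | (∏ i, x i ^ β i) ≠ 0}.Finite := by
      apply Set.Finite.subset
        (Set.Finite.pi (t := fun _ : Fin μ => Set.Iio n) (fun _ => Set.finite_Iio n))
      intro β hβ i _
      simp only [Set.mem_Iio]
      by_contra h
      push_neg at h
      apply hβ
      have h1 : (∏ i, x i ^ β i) ∈ M ^ (∑ i, β i) := prod_pow_mem_pow M x hxM β
      have h2 : M ^ (∑ i, β i) ≤ M ^ n :=
        Ideal.pow_le_pow_right (le_trans h (Finset.single_le_sum
          (f := fun i => β i) (fun _ _ => Nat.zero_le _) (Finset.mem_univ i)))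
      rw [hn] at h2
      simpa using h2 h1
    set F := hSfin.toFinset with hFdef
    have hmemF : ∀ β, (∏ i, x i ^ β i) ≠ 0 → β ∈ F := by
      intro β h; rw [hFdef, Set.Finite.mem_toFinset]; exact h
    have key : ∀ k : ℕ, ∀ α : Fin μ → ℕ,
        (F.filter fun γ => mo.lt α γ).card < k → ∀ r : R,
        r * ∏ i, x i ^ α i ∈ Submodule.span κ
          ((fun β => ∏ i, x i ^ β i) '' (monDelta x mo ∩ {β | mo.le α β})) := by
      intro k
      induction k with
      | zero => intro α h; omega
      | succ k ih =>
        intro α hα r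
        have hstep : ∀ β, mo.lt α β → ∀ s : R,
            s * ∏ i, x i ^ β i ∈ Submodule.span κ
              ((fun β => ∏ i, x i ^ β i) '' (monDelta x mo ∩ {γ | mo.le α γ})) := by
          intro β hβ s
          by_cases hz : (∏ i, x i ^ β i) = 0
          · rw [hz, mul_zero]; exact Submodule.zero_mem _
          · have hsub : (F.filter fun γ => mo.lt β γ) ⊂ (F.filter fun γ => mo.lt α γ) := by
              rw [Finset.ssubset_iff_of_subset]
              · exact ⟨β, Finset.mem_filter.mpr ⟨hmemF β hz, hβ⟩,
                  fun h => mo_lt_irrefl mo β (Finset.mem_filter.mp h).2⟩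
              · intro γ hγ
                rw [Finset.mem_filter] at hγ ⊢
                exact ⟨hγ.1, mo_lt_trans mo hβ hγ.2⟩
            have hcard : (F.filter fun γ => mo.lt β γ).card < k := by
              have := Finset.card_lt_card hsub
              omega
            refine Submodule.span_mono ?_ (ih β hcard s)
            apply Set.image_mono
            intro γ hγ
            exact ⟨hγ.1, mo_le_of_lt mo (mo_lt_of_lt_of_le mo hβ hγ.2)⟩
        have hideal : ∀ y ∈ monIdeal x mo α, ∀ s : R,
            s * y ∈ Submodule.span κ
              ((fun β => ∏ i, x i ^ β i) '' (monDelta x mo ∩ {γ | mo.le α γ})) := by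
          intro y hy
          induction hy using Submodule.span_induction with
          | mem z hz =>
            obtain ⟨β, hβ, rfl⟩ := hz
            exact fun s => hstep β hβ s
          | zero => intro s; rw [mul_zero]; exact Submodule.zero_mem _
          | add y z _ _ hy hz => intro s; rw [mul_add]; exact add_mem (hy s) (hz s)
          | smul a y _ hy =>
            intro s
            rw [smul_eq_mul, ← mul_assoc]
            exact hy (s * a)
        obtain ⟨c, hc⟩ := hcoef.2 (IsLocalRing.residue R r)
        have hmem : r - algebraMap κ R c ∈ M := by
          have h1 : IsLocalRing.residue R r = IsLocalRing.residue R (algebraMap κ R c) :=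
            hc.symm
          have h2 := (Ideal.Quotient.mk_eq_mk_iff_sub_mem
            (I := M) r (algebraMap κ R c)).mp h1
          exact h2
        have hr : r = algebraMap κ R c + (r - algebraMap κ R c) := by ring
        rw [hr, add_mul]
        apply add_mem
        · by_cases hΔ : α ∈ monDelta x mo
          · rw [← Algebra.smul_def]
            exact Submodule.smul_mem _ c
              (Submodule.subset_span ⟨α, ⟨hΔ, mo_le_refl mo α⟩, rfl⟩)
          · have hmemI : (∏ i, x i ^ α i) ∈ monIdeal x mo α := by
              by_contra h; exact hΔ h
            exact hideal _ hmemI _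
        · have hmem' : r - algebraMap κ R c ∈ Ideal.span (Set.range x) := by
            rw [hgen]; exact hmem
          have hmul : ∀ z, z ∈ Ideal.span (Set.range x) → ∀ s : R,
              (s * z) * ∏ i, x i ^ α i ∈ Submodule.span κ
                ((fun β => ∏ i, x i ^ β i) '' (monDelta x mo ∩ {γ | mo.le α γ})) := by
            intro z hz
            induction hz using Submodule.span_induction with
            | mem z hz =>
              obtain ⟨i, rfl⟩ := hz
              intro s
              set β' : Fin μ → ℕ := α + Pi.single i 1 with hβ'def
              have hprod : x i * ∏ j, x j ^ α j = ∏ j, x j ^ β' j := by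
                have h1 : ∀ j, β' j = α j + (Pi.single i 1 : Fin μ → ℕ) j := fun j => rfl
                calc x i * ∏ j, x j ^ α j
                    = (∏ j, x j ^ (Pi.single i 1 : Fin μ → ℕ) j) * ∏ j, x j ^ α j := by
                      congr 1
                      rw [Finset.prod_eq_single i]
                      · simp
                      · intro j _ hj; simp [Pi.single_eq_of_ne hj]
                      · simp
                  _ = ∏ j, x j ^ β' j := by
                      rw [← Finset.prod_mul_distrib]
                      apply Finset.prod_congr rfl
                      intro j _
                      rw [h1 j, pow_add, mul_comm]
              have hlt : mo.lt α β' := by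
                have hle : mo.le α β' := by
                  have := hadd 0 (Pi.single i 1) α (h0 (Pi.single i 1))
                  rw [hβ'def]
                  rwa [zero_add, add_comm] at this
                apply mo_lt_of_le_of_ne mo hle
                intro h
                have h2 := congrFun (h.trans hβ'def) i
                simp [Pi.single_eq_same] at h2
              rw [mul_assoc, hprod]
              exact hstep _ hlt s
            | zero => intro s; rw [mul_zero, zero_mul]; exact Submodule.zero_mem _
            | add y z _ _ hy hz =>
              intro s
              rw [mul_add, add_mul]
              exact add_mem (hy s) (hz s)
            | smul a y _ hy =>
              intro s
              rw [smul_eq_mul, ← mul_assoc]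
              exact hy (s * a)
          have := hmul _ hmem' 1
          rwa [one_mul] at this
    rw [eq_top_iff]
    intro r _
    have h1 := key ((F.filter fun γ => mo.lt 0 γ).card + 1) 0
      (Nat.lt_succ_self _) r
    have h2 : (∏ i, x i ^ (0 : Fin μ → ℕ) i) = 1 := by simp
    rw [h2, mul_one] at h1
    have h3 : monDelta x mo ∩ {β | mo.le 0 β} = monDelta x mo :=
      Set.inter_eq_self_of_subset_left (fun β _ => h0 β)
    rw [h3, Set.image_eq_range] at h1
    exact h1
end

section
/- Let κ be an algebraically closed field and let (R, 𝔪) be an Artinian local commutative ring that is a finite-dimensional κ-algebra whose structure map induces an isomorphism κ ≅ R/𝔪. Let λ be a field extension of κ and set S = R ⊗_κ λ. Let P₁, …, P_N ∈ R[T₁, …, T_n] and let 0 ≤ M ≤ N. If there exists s ∈ Sⁿ with Pᵢ(s) = 0 for 1 ≤ i ≤ M and Pᵢ(s) ≠ 0 for M < i ≤ N (coefficients viewed in S via r ↦ r ⊗ 1), then there exists r ∈ Rⁿ with Pᵢ(r) = 0 for 1 ≤ i ≤ M and Pᵢ(r) ≠ 0 for M < i ≤ N. -/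
/-!
Weil restriction along a `κ`-basis `b₁, …, b_d` of `R` turns each `P ∈ R[T₁, …, Tₙ]` into `d`
polynomials over `κ` in the `n d` coordinates of the variables, uniformly in every base change
`R ⊗[κ] B`: `P` vanishes at `(∑ₖ bₖ ⊗ y_{j,k})ⱼ` iff all its coordinate polynomials vanish at `y`.
The system over `R` thus becomes a system of equations and inequations over `κ` that has a
solution in `λ`, and the Nullstellensatz, with the Rabinowitsch trick for the inequations,
provides a solution in `κ`, that is, in `R`.
-/

open TensorProduct MvPolynomial

namespace Module.Basis

section TensorCoord

variable {κ M B C ι : Type*} [CommSemiring κ] [AddCommMonoid M] [Module κ M]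
  [AddCommMonoid B] [Module κ B] [AddCommMonoid C] [Module κ C] (b : Basis ι κ M)

noncomputable def tensorCoord (k : ι) : M ⊗[κ] B →ₗ[κ] B :=
  TensorProduct.lid κ B ∘ₗ (b.coord k).rTensor B

@[simp]
lemma tensorCoord_tmul (k : ι) (m : M) (c : B) :
    b.tensorCoord k (m ⊗ₜ c) = b.repr m k • c := by
  simp [tensorCoord]

lemma tensorCoord_lTensor (f : B →ₗ[κ] C) (k : ι) (x : M ⊗[κ] B) :
    b.tensorCoord k (f.lTensor M x) = f (b.tensorCoord k x) := by
  induction x using TensorProduct.induction_on with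
  | zero => simp
  | tmul m c => simp
  | add x y hx hy => simp only [map_add, hx, hy]

variable [Fintype ι]

lemma sum_tmul_tensorCoord (x : M ⊗[κ] B) : ∑ k, b k ⊗ₜ b.tensorCoord k x = x := by
  induction x using TensorProduct.induction_on with
  | zero => simp
  | tmul m c =>
    simp_rw [tensorCoord_tmul, ← smul_tmul, ← sum_tmul, b.sum_repr]
  | add x y hx hy => simp only [map_add, tmul_add, Finset.sum_add_distrib, hx, hy]

lemma forall_tensorCoord_eq_zero_iff {x : M ⊗[κ] B} : (∀ k, b.tensorCoord k x = 0) ↔ x = 0 :=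
  ⟨fun h => by rw [← b.sum_tmul_tensorCoord x]; simp [h], fun h k => by simp [h]⟩

end TensorCoord

section WeilRestriction

variable {κ R ι σ B : Type*} [CommRing κ] [CommRing R] [Algebra κ R] [Fintype ι]
  [CommRing B] [Algebra κ B] (b : Basis ι κ R)

noncomputable def weilPoint (y : σ × ι → B) : σ → R ⊗[κ] B := fun j => ∑ k, b k ⊗ₜ y (j, k)

noncomputable def weilCoord (P : MvPolynomial σ R) (k : ι) : MvPolynomial (σ × ι) κ :=
  b.tensorCoord k (aeval (b.weilPoint X) P)

lemma tensorCoord_aeval_weilPoint (P : MvPolynomial σ R) (y : σ × ι → B) (k : ι) :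
    b.tensorCoord k (aeval (b.weilPoint y) P) = aeval y (b.weilCoord P k) := by
  let Φ := Algebra.TensorProduct.lTensor (S := R) R (aeval (R := κ) y)
  have hpoint : b.weilPoint y = fun j => Φ (b.weilPoint X j) := by
    ext j
    simp [weilPoint, Φ]
  rw [hpoint, ← comp_aeval_apply]
  exact b.tensorCoord_lTensor (aeval y).toLinearMap k _

lemma aeval_weilPoint_eq_zero_iff (P : MvPolynomial σ R) (y : σ × ι → B) :
    aeval (b.weilPoint y) P = 0 ↔ ∀ k, aeval y (b.weilCoord P k) = 0 := by
  simp only [← tensorCoord_aeval_weilPoint, forall_tensorCoord_eq_zero_iff]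

lemma aeval_sum_smul_eq_zero_iff (P : MvPolynomial σ R) (x : σ × ι → κ) :
    aeval (fun j => ∑ k, x (j, k) • b k) P = 0 ↔ ∀ k, aeval x (b.weilCoord P k) = 0 := by
  have hpoint : (fun j => ∑ k, x (j, k) • b k) =
      fun j => (Algebra.TensorProduct.rid κ R R : R ⊗[κ] κ →ₐ[R] R) (b.weilPoint x j) := by
    ext j
    simp [weilPoint]
  rw [hpoint, ← comp_aeval_apply, ← b.aeval_weilPoint_eq_zero_iff]
  exact AddEquivClass.map_eq_zero_iff (f := Algebra.TensorProduct.rid κ R R)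

end WeilRestriction

end Module.Basis

section Nullstellensatz

variable {κ σ ι : Type*} [Field κ] [IsAlgClosed κ] [Finite σ]

theorem MvPolynomial.exists_aeval_eq_zero_of_aeval_eq_zero {L : Type*} [CommRing L]
    [Nontrivial L] [Algebra κ L] (F : ι → MvPolynomial σ κ) (y : σ → L)
    (hy : ∀ i, aeval y (F i) = 0) : ∃ x : σ → κ, ∀ i, aeval x (F i) = 0 := by
  have hle : Ideal.span (Set.range F) ≤ RingHom.ker (aeval (R := κ) y) :=
    Ideal.span_le.2 (Set.range_subset_iff.2 hy)
  obtain ⟨m, hm, hFm⟩ :=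
    Ideal.exists_le_maximal _ (ne_top_of_le_ne_top (RingHom.ker_ne_top _) hle)
  obtain ⟨x, rfl⟩ := eq_vanishingIdeal_singleton_of_isMaximal κ hm
  exact ⟨x, fun i => (mem_vanishingIdeal_singleton_iff x _).1 (hFm (Ideal.subset_span ⟨i, rfl⟩))⟩

theorem MvPolynomial.exists_aeval_eq_zero_and_ne_zero_of_aeval {L : Type*} [Field L]
    [Algebra κ L] {J : Type*} [Fintype J] (F : ι → MvPolynomial σ κ) (G : J → MvPolynomial σ κ)
    (y : σ → L)
    (hF : ∀ i, aeval y (F i) = 0) (hG : ∀ j, aeval y (G j) ≠ 0) :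
    ∃ x : σ → κ, (∀ i, aeval x (F i) = 0) ∧ ∀ j, aeval x (G j) ≠ 0 := by
  -- Rabinowitsch: `∏ j, G j ≠ 0` becomes the equation `(∏ j, G j) * T = 1` in a new variable `T`.
  let F' : Option ι → MvPolynomial (Option σ) κ := fun o =>
    o.elim (rename some (∏ j, G j) * X none - 1) fun i => rename some (F i)
  let y' : Option σ → L := fun o => o.elim (aeval y (∏ j, G j))⁻¹ y
  have hy' : ∀ o, aeval y' (F' o) = 0 := by
    rintro (_ | i)
    · simp [F', y', aeval_rename, Function.comp_def, Finset.prod_ne_zero_iff.2 fun j _ => hG j]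
    · simp [F', y', aeval_rename, Function.comp_def, hF i]
  obtain ⟨x', hx'⟩ := exists_aeval_eq_zero_of_aeval_eq_zero F' y' hy'
  refine ⟨x' ∘ some, fun i => by simpa [F', aeval_rename] using hx' (some i), fun j => ?_⟩
  have hunit : aeval (x' ∘ some) (∏ j, G j) * x' none = 1 := by
    simpa only [F', Option.elim, map_sub, map_mul, map_one, aeval_rename, aeval_X,
      sub_eq_zero] using hx' none
  have hprod := left_ne_zero_of_mul_eq_one hunit
  rw [map_prod] at hprod
  exact Finset.prod_ne_zero_iff.1 hprod j (Finset.mem_univ j)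

end Nullstellensatz

theorem stmt_12_general (κ : Type u) [Field κ] [IsAlgClosed κ]
    (R : Type u) [CommRing R] [Algebra κ R]
    [Module.Finite κ R]
    (lam : Type u) [Field lam] [Algebra κ lam]
    (n N M : ℕ) (P : Fin N → MvPolynomial (Fin n) R)
    (hs : ∃ s : Fin n → R ⊗[κ] lam,
        (∀ i : Fin N, (i : ℕ) < M →
          MvPolynomial.eval₂ (algebraMap R (R ⊗[κ] lam)) s (P i) = 0) ∧
        (∀ i : Fin N, M ≤ (i : ℕ) →
          MvPolynomial.eval₂ (algebraMap R (R ⊗[κ] lam)) s (P i) ≠ 0)) :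
    ∃ r : Fin n → R,
      (∀ i : Fin N, (i : ℕ) < M → MvPolynomial.eval r (P i) = 0) ∧
      (∀ i : Fin N, M ≤ (i : ℕ) → MvPolynomial.eval r (P i) ≠ 0) := by
  obtain ⟨s, hs0, hs1⟩ := hs
  let b := Module.finBasis κ R
  let y : Fin n × Fin _ → lam := fun p => b.tensorCoord p.2 (s p.1)
  have hsy : b.weilPoint y = s := funext fun j => b.sum_tmul_tensorCoord (s j)
  simp only [← aeval_def, ← hsy, b.aeval_weilPoint_eq_zero_iff, ne_eq, not_forall] at hs0 hs1
  choose K hK using fun i : {i : Fin N // M ≤ (i : ℕ)} => hs1 i i.2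
  obtain ⟨x, hx0, hx1⟩ := exists_aeval_eq_zero_and_ne_zero_of_aeval
    (fun p : {i : Fin N // (i : ℕ) < M} × Fin _ => b.weilCoord (P p.1) p.2)
    (fun i : {i : Fin N // M ≤ (i : ℕ)} => b.weilCoord (P i) (K i)) y
    (fun p => hs0 p.1 p.1.2 p.2) hK
  refine ⟨fun j => ∑ k, x (j, k) • b k, fun i hi => ?_, fun i hi => ?_⟩
  · exact (b.aeval_sum_smul_eq_zero_iff (P i) x).2 fun k => hx0 (⟨i, hi⟩, k)
  · exact mt (b.aeval_sum_smul_eq_zero_iff (P i) x).1 fun h => hx1 ⟨i, hi⟩ (h _)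

/-- Let `κ` be an algebraically closed field and `R` an equicharacteristic Artinian local ring
with coefficient field `κ`. Let `λ/κ` be a field extension and `S = R ⊗_κ λ`. Then any finite
system of polynomial equalities and inequalities over `R` that has a solution in `S` already
has a solution in `R`. -/
theorem stmt_12 (κ : Type u) [Field κ] [IsAlgClosed κ]
    (R : Type u) [CommRing R] [IsArtinianRing R] [IsLocalRing R] [Algebra κ R]
    [Module.Finite κ R]
    (hcoef : Function.Bijective ((IsLocalRing.residue R).comp (algebraMap κ R)))
    (lam : Type u) [Field lam] [Algebra κ lam]
    (n N M : ℕ) (hMN : M ≤ N) (P : Fin N → MvPolynomial (Fin n) R)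
    (hs : ∃ s : Fin n → R ⊗[κ] lam,
        (∀ i : Fin N, (i : ℕ) < M →
          MvPolynomial.eval₂ (algebraMap R (R ⊗[κ] lam)) s (P i) = 0) ∧
        (∀ i : Fin N, M ≤ (i : ℕ) →
          MvPolynomial.eval₂ (algebraMap R (R ⊗[κ] lam)) s (P i) ≠ 0)) :
    ∃ r : Fin n → R,
      (∀ i : Fin N, (i : ℕ) < M → MvPolynomial.eval r (P i) = 0) ∧
      (∀ i : Fin N, M ≤ (i : ℕ) → MvPolynomial.eval r (P i) ≠ 0) :=
  stmt_12_general κ R lam n N M P hs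
end

section
/- Let (R, 𝔪) be an Artinian local commutative ring of exponent e (so 𝔪^e = 0) whose residue field κ = R/𝔪 has positive characteristic p and is algebraically closed. Then for every sufficiently large power q = p^N of p the following hold: q·1 = 0 in R; for all a, b ∈ R one has a ≡ b (mod 𝔪) if and only if a^q = b^q; and there exists a function ω : κ → R (the Witt map) such that ω is multiplicative (ω(uv) = ω(u)ω(v) for all u, v ∈ κ), the residue of ω(u) in κ equals u for every u ∈ κ, and the image of ω equals the set W = {a^q : a ∈ R} of Witt vectors of R. -/
/-!
Since `p ∈ 𝔪`, a congruence `a ≡ b mod 𝔪` improves to `a ^ p ^ k ≡ b ^ p ^ k mod 𝔪 ^ (k + 1)`,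
so once `𝔪 ^ e = 0` the power `a ^ q` (`q = p ^ N`, `N + 1 ≥ e`) depends only on the residue
of `a`. Conversely the `q`-th power map of the perfect field `κ` is injective. Hence
`ω(u) = b ^ q`, for any lift `b` of the `q`-th root of `u`, is well defined; it is
multiplicative because taking `q`-th roots in `κ` is, and every `a ^ q` is `ω(ā ^ q)`.
-/

open IsLocalRing

theorem Ideal.sub_pow_prime_pow_mem_pow {R : Type*} [CommRing R] {I : Ideal R} {p : ℕ}
    (hp : (p : R) ∈ I) {a b : R} (hab : a - b ∈ I) (k : ℕ) :
    a ^ p ^ k - b ^ p ^ k ∈ I ^ (k + 1) := by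
  induction k with
  | zero => simpa using hab
  | succ k ih =>
    -- modulo `I` the two summands agree, so the cofactor of `a ^ p ^ k - b ^ p ^ k` is `p * _`
    have hcofactor :
        ∑ i ∈ Finset.range p, (a ^ p ^ k) ^ i * (b ^ p ^ k) ^ (p - 1 - i) ∈ I := by
      have hk : Ideal.Quotient.mk I (a ^ p ^ k) = Ideal.Quotient.mk I (b ^ p ^ k) :=
        Ideal.Quotient.eq.mpr (Ideal.pow_le_self k.succ_ne_zero ih)
      rw [← Ideal.Quotient.eq_zero_iff_mem, RingHom.map_geom_sum₂, hk, geom_sum₂_self,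
        ← map_natCast (Ideal.Quotient.mk I), Ideal.Quotient.eq_zero_iff_mem.mpr hp, zero_mul]
    rw [pow_succ p k, pow_mul, pow_mul, ← geom_sum₂_mul, pow_succ']
    exact Ideal.mul_mem_mul hcofactor ih

theorem Ideal.eq_zero_of_mem_pow_of_pow_eq_bot {R : Type*} [CommRing R] {I : Ideal R} {e N : ℕ}
    (he : I ^ e = ⊥) (hN : e ≤ N) {x : R} (hx : x ∈ I ^ N) : x = 0 :=
  Ideal.mem_bot.mp (he ▸ Ideal.pow_le_pow_right hN hx)

namespace IsLocalRing

variable {R : Type*} [CommRing R] [IsLocalRing R] {p : ℕ}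

theorem natCast_mem_maximalIdeal_of_charP [CharP (ResidueField R) p] :
    (p : R) ∈ maximalIdeal R := by
  rw [← residue_eq_zero_iff, map_natCast, CharP.cast_eq_zero]

theorem pow_prime_pow_eq_of_sub_mem [CharP (ResidueField R) p] {e N : ℕ}
    (he : maximalIdeal R ^ e = ⊥) (hN : e ≤ N + 1) {a b : R} (hab : a - b ∈ maximalIdeal R) :
    a ^ p ^ N = b ^ p ^ N :=
  sub_eq_zero.mp <| Ideal.eq_zero_of_mem_pow_of_pow_eq_bot he hN <|
    Ideal.sub_pow_prime_pow_mem_pow natCast_mem_maximalIdeal_of_charP hab N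

theorem sub_mem_of_pow_prime_pow_eq [ExpChar (ResidueField R) p] [PerfectRing (ResidueField R) p]
    {N : ℕ} {a b : R} (hab : a ^ p ^ N = b ^ p ^ N) : a - b ∈ maximalIdeal R := by
  rw [← residue_eq_zero_iff, map_sub, sub_eq_zero]
  apply (iterateFrobeniusEquiv (ResidueField R) p N).injective
  rw [iterateFrobeniusEquiv_def, iterateFrobeniusEquiv_def, ← map_pow, ← map_pow, hab]

section WittMap

variable (R p) [ExpChar (ResidueField R) p] [PerfectRing (ResidueField R) p]

noncomputable def wittMap (N : ℕ) (u : ResidueField R) : R :=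
  Function.surjInv residue_surjective ((iterateFrobeniusEquiv (ResidueField R) p N).symm u) ^ p ^ N

variable {R p}

theorem residue_wittMap (N : ℕ) (u : ResidueField R) : residue R (wittMap R p N u) = u := by
  rw [wittMap, map_pow, Function.surjInv_eq residue_surjective, ← iterateFrobeniusEquiv_def,
    RingEquiv.apply_symm_apply]

variable [CharP (ResidueField R) p] {e N : ℕ}

theorem wittMap_eq_pow (he : maximalIdeal R ^ e = ⊥) (hN : e ≤ N + 1)
    {u : ResidueField R} {a : R}
    (ha : residue R a = (iterateFrobeniusEquiv (ResidueField R) p N).symm u) :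
    wittMap R p N u = a ^ p ^ N := by
  refine pow_prime_pow_eq_of_sub_mem he hN ?_
  rw [← residue_eq_zero_iff, map_sub, sub_eq_zero, ha, Function.surjInv_eq residue_surjective]

theorem wittMap_mul (he : maximalIdeal R ^ e = ⊥) (hN : e ≤ N + 1) (u v : ResidueField R) :
    wittMap R p N (u * v) = wittMap R p N u * wittMap R p N v := by
  obtain ⟨a, ha⟩ := residue_surjective ((iterateFrobeniusEquiv (ResidueField R) p N).symm u)
  obtain ⟨b, hb⟩ := residue_surjective ((iterateFrobeniusEquiv (ResidueField R) p N).symm v)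
  rw [wittMap_eq_pow he hN ha, wittMap_eq_pow he hN hb, ← mul_pow]
  exact wittMap_eq_pow he hN (by rw [map_mul, ha, hb, map_mul])

theorem range_wittMap (he : maximalIdeal R ^ e = ⊥) (hN : e ≤ N + 1) :
    Set.range (wittMap R p N) = {w : R | ∃ a : R, w = a ^ p ^ N} := by
  ext w
  constructor
  · rintro ⟨u, rfl⟩
    exact ⟨_, rfl⟩
  · rintro ⟨a, rfl⟩
    refine ⟨residue R a ^ p ^ N, wittMap_eq_pow he hN ?_⟩
    rw [← iterateFrobeniusEquiv_def, RingEquiv.symm_apply_apply]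

end WittMap

end IsLocalRing

theorem stmt_14_general (R : Type u) [CommRing R] [IsLocalRing R]
    (p e : ℕ) (hp : p.Prime) [CharP (ResidueField R) p]
    [IsAlgClosed (ResidueField R)]
    (he : (maximalIdeal R) ^ e = ⊥) :
    ∃ N₀ : ℕ, ∀ N : ℕ, N₀ ≤ N →
      (((p ^ N : ℕ) : R) = 0) ∧
      (∀ a b : R, a - b ∈ maximalIdeal R ↔ a ^ (p ^ N) = b ^ (p ^ N)) ∧
      ∃ ω : ResidueField R → R,
        (∀ u v : ResidueField R, ω (u * v) = ω u * ω v) ∧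
        (∀ u : ResidueField R, residue R (ω u) = u) ∧
        Set.range ω = { w : R | ∃ a : R, w = a ^ (p ^ N) } := by
  have : Fact p.Prime := ⟨hp⟩
  refine ⟨e, fun N hN => ⟨?_, fun a b => ?_, wittMap R p N, wittMap_mul he (by omega),
    residue_wittMap N, range_wittMap he (by omega)⟩⟩
  · rw [Nat.cast_pow]
    exact Ideal.eq_zero_of_mem_pow_of_pow_eq_bot he hN
      (Ideal.pow_mem_pow natCast_mem_maximalIdeal_of_charP N)
  · exact ⟨pow_prime_pow_eq_of_sub_mem he (by omega), sub_mem_of_pow_prime_pow_eq⟩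

/-- Let `(R, 𝔪)` be an Artinian local ring of exponent `e` whose residue field `κ` is
algebraically closed of characteristic `p > 0`. Then for every sufficiently large power
`q = p^N`: `q = 0` in `R`; congruence modulo `𝔪` is equivalent to equality of `q`-th powers;
and there is a multiplicative Witt map `ω : κ → R` splitting the residue map, whose image is
the set `W = {a^q : a ∈ R}` of Witt vectors of `R`. -/
theorem stmt_14 (R : Type u) [CommRing R] [IsArtinianRing R] [IsLocalRing R]
    (p e : ℕ) (hp : p.Prime) [CharP (ResidueField R) p]
    [IsAlgClosed (ResidueField R)]
    (he : (maximalIdeal R) ^ e = ⊥) :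
    ∃ N₀ : ℕ, ∀ N : ℕ, N₀ ≤ N →
      (((p ^ N : ℕ) : R) = 0) ∧
      (∀ a b : R, a - b ∈ maximalIdeal R ↔ a ^ (p ^ N) = b ^ (p ^ N)) ∧
      ∃ ω : ResidueField R → R,
        (∀ u v : ResidueField R, ω (u * v) = ω u * ω v) ∧
        (∀ u : ResidueField R, residue R (ω u) = u) ∧
        Set.range ω = { w : R | ∃ a : R, w = a ^ (p ^ N) } :=
  stmt_14_general R p e hp he
end

section
/- Let (R, 𝔪) be an Artinian local commutative ring whose residue field κ = R/𝔪 has positive characteristic p and is algebraically closed, and let q = p^N with N sufficiently large (so that both q and q² have the property that congruence modulo 𝔪 is equivalent to equality of the corresponding powers). Then for all a, b ∈ R: a^q ≡ b^q (mod 𝔪) if and only if a^q = b^q. In particular, the decomposition of an element of R as w + m with w a Witt vector (a q-th power in R) and m ∈ 𝔪 is unique. -/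
open IsLocalRing

/-- Let `(R, 𝔪)` be an Artinian local ring whose residue field has characteristic `p > 0` and
is algebraically closed, and let `q = p^N` with `N` large enough that congruence modulo `𝔪` is
equivalent to equality of `q`-th powers, and likewise for `q²`. Then two Witt vectors `a^q`,
`b^q` are congruent modulo `𝔪` if and only if they are equal; consequently the decomposition
of an element of `R` as (Witt vector) + (element of `𝔪`) is unique. -/
theorem stmt_15 (R : Type u) [CommRing R] [IsArtinianRing R] [IsLocalRing R]
    (p N : ℕ) (hp : p.Prime) [CharP (ResidueField R) p] [IsAlgClosed (ResidueField R)]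
    (q : ℕ) (hq : q = p ^ N)
    (hcong : ∀ a b : R, a - b ∈ maximalIdeal R ↔ a ^ q = b ^ q)
    (hcong2 : ∀ a b : R, a - b ∈ maximalIdeal R ↔ a ^ (q ^ 2) = b ^ (q ^ 2)) :
    (∀ a b : R, a ^ q - b ^ q ∈ maximalIdeal R ↔ a ^ q = b ^ q) ∧
    (∀ a b m m' : R, m ∈ maximalIdeal R → m' ∈ maximalIdeal R →
      a ^ q + m = b ^ q + m' → a ^ q = b ^ q ∧ m = m') := by
  have key : ∀ a b : R, a ^ q - b ^ q ∈ maximalIdeal R ↔ a ^ q = b ^ q := by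
    intro a b
    constructor
    · intro h
      have h1 : (a ^ q) ^ q = (b ^ q) ^ q := (hcong _ _).mp h
      rw [← pow_mul, ← pow_mul, ← sq] at h1
      have h2 : a - b ∈ maximalIdeal R := (hcong2 a b).mpr h1
      exact (hcong a b).mp h2
    · intro h; rw [h, sub_self]; exact zero_mem _
  refine ⟨key, fun a b m m' hm hm' heq => ?_⟩
  have h : a ^ q - b ^ q = m' - m := by linear_combination heq
  have hmem : a ^ q - b ^ q ∈ maximalIdeal R := h ▸ sub_mem hm' hm
  have he : a ^ q = b ^ q := (key a b).mp hmem
  exact ⟨he, by linear_combination heq - he⟩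
end

section
/- Let (R, 𝔪) be an Artinian local commutative ring of mixed characteristic whose residue field κ = R/𝔪 is algebraically closed of characteristic p > 0, and let q = p^N with N sufficiently large. Fix a minimal system of generators x = (x₁, …, x_μ) of 𝔪 and a monomial ordering ≤ on ℕ^μ; let Δ_R = {α ∈ ℕ^μ : x^α ∉ 𝔞(α)}, where 𝔞(α) is the ideal generated by all x^β with β > α. Then: (1) every r ∈ R can be written as r = Σ_{α ∈ Δ_R} a_α^q x^α with a_α ∈ R, and the coefficients a_α^q ∈ W are uniquely determined by r (i.e., the monomials {x^α : α ∈ Δ_R} form a Witt base of R); (2) the ideals 𝔞(α), for α running over Δ_R from the largest to the smallest index, form a maximal strictly ascending chain of ideals of R, and hence the cardinality of Δ_R equals the length ℓ(R). -/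
open IsLocalRing

/-!
Only two properties of the monomials `x^α` matter: `𝔪 · x^α ⊆ 𝔞(α)`, because multiplying by a
generator `xᵢ` raises the exponent in the monomial ordering, and only finitely many `x^α` are
nonzero, because `𝔪` is nilpotent. Downward induction over these finitely many exponents shows that
`𝔞(α)` is already spanned by the `x^β` with `β ∈ Δ_R`, `β > α`. Consequently two consecutive ideals
of the chain differ by a single monomial killed by `𝔪`, so the chain is a composition series
and `#Δ_R = ℓ(R)` by Jordan–Hölder. For the Witt base, the coefficient `c` of `x^α` is replaced by a
`q`-th power congruent to `c` modulo `𝔪` (which exists as `κ` is algebraically closed); the error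
lies in `𝔞(α)` and is absorbed by larger exponents. Uniqueness: in a relation, the difference of
the coefficients at the smallest exponent lies in `𝔪` since `x^α ∉ 𝔞(α)`, and `q`-th powers that
agree modulo `𝔪` are equal.
-/

open Set

section UpperSetInduction

variable {σ : Type*} [LinearOrder σ]

theorem IsUpperSet.induction_of_finite {D : Set σ} (hD : D.Finite) {P : Set σ → Prop}
    (empty : ∀ U, IsUpperSet U → D ∩ U = ∅ → P U)
    (step : ∀ U δ, IsUpperSet U → IsLeast (D ∩ U) δ → P (Ioi δ) → P U)
    {U : Set σ} (hU : IsUpperSet U) : P U := by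
  induction hn : (D ∩ U).ncard using Nat.strong_induction_on generalizing U with
  | _ n ih =>
  rcases (D ∩ U).eq_empty_or_nonempty with hDU | hDU
  · exact empty U hU hDU
  obtain ⟨δ, hδ, hδmin⟩ := (D ∩ U).exists_min_image id (hD.inter_of_left U) hDU
  have hδ : IsLeast (D ∩ U) δ := ⟨hδ, hδmin⟩
  refine step U δ hU hδ (ih _ ?_ (isUpperSet_Ioi δ) rfl)
  rw [← hn]
  refine ncard_lt_ncard ⟨fun x hx => ⟨hx.1, hU hx.2.le hδ.1.2⟩, fun h => ?_⟩ (hD.inter_of_left U)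
  exact lt_irrefl δ (h hδ.1).2

theorem Finset.coe_erase_of_isLeast {T : Finset σ} {D U : Set σ} (hU : IsUpperSet U)
    (hT : ↑T = D ∩ U) {δ : σ} (hδ : IsLeast (D ∩ U) δ) : ↑(T.erase δ) = D ∩ Set.Ioi δ := by
  ext x
  rw [Finset.coe_erase, hT]
  exact ⟨fun ⟨hx, hne⟩ => ⟨hx.1, lt_of_le_of_ne (hδ.2 hx) (Ne.symm hne)⟩,
    fun ⟨hxD, hx⟩ => ⟨⟨hxD, hU hx.le hδ.1.2⟩, hx.ne'⟩⟩

end UpperSetInduction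

theorem Ideal.covBy_sup_span_singleton {R : Type*} [CommRing R] [IsLocalRing R] {I : Ideal R}
    {y : R} (hy : y ∉ I) (hmy : ∀ c ∈ maximalIdeal R, c * y ∈ I) : I ⋖ I ⊔ Ideal.span {y} := by
  refine ⟨left_lt_sup.2 (by rwa [Ideal.span_singleton_le_iff_mem]), fun K hIK hKJ => ?_⟩
  obtain ⟨k, hkK, hkI⟩ := SetLike.exists_of_lt hIK
  obtain ⟨i, hi, s, hs, rfl⟩ := Submodule.mem_sup.1 (hKJ.le hkK)
  obtain ⟨c, rfl⟩ := Ideal.mem_span_singleton'.1 hs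
  have hc : IsUnit c := by
    by_contra hc
    exact hkI (add_mem hi (hmy c ((mem_maximalIdeal c).2 hc)))
  have hyK : y ∈ K := by
    rw [← Ideal.unit_mul_mem_iff_mem K hc, ← add_sub_cancel_left i (c * y)]
    exact sub_mem hkK (hIK.le hi)
  exact hKJ.not_ge (sup_le hIK.le ((Ideal.span_singleton_le_iff_mem K).2 hyK))

section StandardIndices

variable {R σ : Type*} [CommRing R] [LinearOrder σ]

/-- For `m α = x^α` and a monomial ordering this is `Δ_R`. -/
def standardIndices (m : σ → R) : Set σ := {α | m α ∉ Ideal.span (m '' Ioi α)}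

variable {m : σ → R}

theorem standardIndices_subset_support : standardIndices m ⊆ Function.support m :=
  fun α hα h => hα (by rw [h]; exact zero_mem _)

theorem span_image_Ioi_lt_of_mem_standardIndices {α β : σ} (hβ : β ∈ standardIndices m)
    (h : α < β) : Ideal.span (m '' Ioi β) < Ideal.span (m '' Ioi α) :=
  lt_of_le_of_ne (Ideal.span_mono (image_mono (Ioi_subset_Ioi h.le)))
    fun heq => hβ (heq ▸ Ideal.subset_span ⟨β, h, rfl⟩)

theorem span_image_Ioi_covBy_Ici [IsLocalRing R]
    (hmul : ∀ α, ∀ c ∈ maximalIdeal R, c * m α ∈ Ideal.span (m '' Ioi α)) {δ : σ}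
    (hδ : δ ∈ standardIndices m) : Ideal.span (m '' Ioi δ) ⋖ Ideal.span (m '' Ici δ) := by
  rw [← Ioi_insert, image_insert_eq, Ideal.span_insert, sup_comm]
  exact Ideal.covBy_sup_span_singleton hδ (hmul δ)

theorem eq_zero_of_sum_mul_eq_zero [IsLocalRing R] (s : Finset σ) (hs : ↑s ⊆ standardIndices m)
    (c : σ → R) (hc : ∀ α ∈ s, c α ∈ maximalIdeal R → c α = 0) (h : ∑ α ∈ s, c α * m α = 0) :
    ∀ α ∈ s, c α = 0 := by
  induction s using Finset.induction_on_min with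
  | empty => simp
  | insert a s hlt ih =>
    rw [Finset.coe_insert, insert_subset_iff] at hs
    rw [Finset.sum_insert (fun ha => lt_irrefl a (hlt a ha))] at h
    have hmem : c a * m a ∈ Ideal.span (m '' Ioi a) := by
      rw [eq_neg_of_add_eq_zero_left h]
      exact neg_mem (Ideal.sum_mem _ fun α hα =>
        Ideal.mul_mem_left _ _ (Ideal.subset_span ⟨α, hlt α hα, rfl⟩))
    have hca : c a = 0 := by
      refine hc a (Finset.mem_insert_self a s) ((mem_maximalIdeal _).2 fun hu => hs.1 ?_)
      exact (Ideal.unit_mul_mem_iff_mem _ hu).1 hmem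
    rw [hca, zero_mul, zero_add] at h
    intro α hα
    rcases Finset.mem_insert.1 hα with rfl | hα
    · exact hca
    · exact ih hs.2 (fun β hβ => hc β (Finset.mem_insert_of_mem hβ)) h α hα

theorem apply_eq_of_sum_eq_sum [IsLocalRing R] {f : R → R}
    (hf : ∀ a b, f a - f b ∈ maximalIdeal R → f a = f b) (s : Finset σ)
    (hs : ↑s ⊆ standardIndices m) {a b : σ → R}
    (h : ∑ α ∈ s, f (a α) * m α = ∑ α ∈ s, f (b α) * m α) : ∀ α ∈ s, f (a α) = f (b α) := by
  refine fun α hα => sub_eq_zero.1 (eq_zero_of_sum_mul_eq_zero s hs (fun α => f (a α) - f (b α))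
    (fun α _ hα => sub_eq_zero.2 (hf _ _ hα)) ?_ α hα)
  simp only [sub_mul, Finset.sum_sub_distrib, h, sub_self]

variable (hfin : (Function.support m).Finite)
include hfin

theorem span_image_standardIndices_inter {U : Set σ} (hU : IsUpperSet U) :
    Ideal.span (m '' (standardIndices m ∩ U)) = Ideal.span (m '' U) := by
  refine le_antisymm (Ideal.span_mono (image_mono inter_subset_right))
    (Ideal.span_le.2 (image_subset_iff.2 ?_))
  refine IsUpperSet.induction_of_finite (P := fun U =>
    ∀ β ∈ U, m β ∈ Ideal.span (m '' (standardIndices m ∩ U))) hfin ?_ ?_ hU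
  · intro U _ hU β hβ
    have : m β = 0 := by
      by_contra h
      exact (Set.eq_empty_iff_forall_notMem.1 hU) β ⟨h, hβ⟩
    rw [this]
    exact zero_mem _
  · intro U δ hU hδ ih β hβ
    have hIoi : Ideal.span (m '' Ioi δ) ≤ Ideal.span (m '' (standardIndices m ∩ U)) := by
      refine Ideal.span_le.2 (image_subset_iff.2 fun γ hγ => ?_)
      exact Ideal.span_mono (image_mono (inter_subset_inter_right _
        fun _ h => hU (le_of_lt h) hδ.1.2)) (ih γ hγ)
    by_cases hβ0 : m β = 0
    · rw [hβ0]; exact zero_mem _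
    rcases (hδ.2 ⟨hβ0, hβ⟩).eq_or_lt with rfl | hlt
    · by_cases hΔ : δ ∈ standardIndices m
      · exact Ideal.subset_span ⟨δ, ⟨hΔ, hβ⟩, rfl⟩
      · exact hIoi (not_not.1 hΔ)
    · exact hIoi (Ideal.subset_span ⟨β, hlt, rfl⟩)

theorem finite_standardIndices : (standardIndices m).Finite :=
  hfin.subset standardIndices_subset_support

theorem span_image_eq_bot {U : Set σ} (hU : IsUpperSet U) (h : standardIndices m ∩ U = ∅) :
    Ideal.span (m '' U) = ⊥ := by
  rw [← span_image_standardIndices_inter hfin hU, h, image_empty, Ideal.span_empty]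

theorem span_image_eq_span_image_Ici {U : Set σ} (hU : IsUpperSet U) {δ : σ}
    (hδ : IsLeast (standardIndices m ∩ U) δ) :
    Ideal.span (m '' U) = Ideal.span (m '' Ici δ) := by
  rw [← span_image_standardIndices_inter hfin hU,
    ← span_image_standardIndices_inter hfin (isUpperSet_Ici δ)]
  congr 2
  ext γ
  exact ⟨fun h => ⟨h.1, hδ.2 h⟩, fun h => ⟨h.1, hU h.2 hδ.1.2⟩⟩

variable [IsLocalRing R] (hmul : ∀ α, ∀ c ∈ maximalIdeal R, c * m α ∈ Ideal.span (m '' Ioi α))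
include hmul

theorem span_image_Ioi_covBy {α β : σ} (hβ : β ∈ standardIndices m) (hlt : α < β)
    (hbetween : ∀ γ ∈ standardIndices m, ¬(α < γ ∧ γ < β)) :
    Ideal.span (m '' Ioi β) ⋖ Ideal.span (m '' Ioi α) := by
  rw [span_image_eq_span_image_Ici hfin (isUpperSet_Ioi α)
    ⟨⟨hβ, hlt⟩, fun γ hγ => not_lt.1 fun h => hbetween γ hγ.1 ⟨hγ.2, h⟩⟩]
  exact span_image_Ioi_covBy_Ici hmul hβ

theorem exists_sum_eq_of_mem_span_image {f : R → R} (hf : ∀ c, ∃ a, c - f a ∈ maximalIdeal R)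
    {U : Set σ} (hU : IsUpperSet U) {T : Finset σ} (hT : ↑T = standardIndices m ∩ U) :
    ∀ r ∈ Ideal.span (m '' U), ∃ a : σ → R, r = ∑ α ∈ T, f (a α) * m α := by
  refine IsUpperSet.induction_of_finite (P := fun U => ∀ T : Finset σ,
    ↑T = standardIndices m ∩ U → ∀ r ∈ Ideal.span (m '' U), ∃ a : σ → R,
      r = ∑ α ∈ T, f (a α) * m α) (finite_standardIndices hfin) ?_ ?_ hU T hT
  · intro U hU hΔU T hT r hr
    rw [span_image_eq_bot hfin hU hΔU, Ideal.mem_bot] at hr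
    rw [hΔU, Finset.coe_eq_empty] at hT
    exact ⟨0, by rw [hr, hT, Finset.sum_empty]⟩
  · intro U δ hU hδ ih T hT r hr
    rw [span_image_eq_span_image_Ici hfin hU hδ, ← Ioi_insert, image_insert_eq,
      Ideal.span_insert] at hr
    obtain ⟨s, hs, t, ht, rfl⟩ := Submodule.mem_sup.1 hr
    obtain ⟨c, rfl⟩ := Ideal.mem_span_singleton'.1 hs
    obtain ⟨a₀, ha₀⟩ := hf c
    obtain ⟨a, ha⟩ := ih (T.erase δ) (Finset.coe_erase_of_isLeast hU hT hδ)
      ((c - f a₀) * m δ + t) (add_mem (hmul δ _ ha₀) ht)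
    refine ⟨Function.update a δ a₀, ?_⟩
    have hδT : δ ∈ T := by rw [← Finset.mem_coe, hT]; exact hδ.1
    rw [← Finset.add_sum_erase T _ hδT, Function.update_self,
      Finset.sum_congr rfl fun α hα => by rw [Function.update_of_ne (Finset.ne_of_mem_erase hα)],
      ← ha]
    ring

theorem exists_sum_eq (hspan : Ideal.span (range m) = ⊤) {f : R → R}
    (hf : ∀ c, ∃ a, c - f a ∈ maximalIdeal R) {T : Finset σ} (hT : ↑T = standardIndices m)
    (r : R) : ∃ a : σ → R, r = ∑ α ∈ T, f (a α) * m α :=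
  exists_sum_eq_of_mem_span_image hfin hmul hf isUpperSet_univ (by rw [hT, inter_univ]) r
    (by rw [image_univ, hspan]; trivial)

theorem exists_compositionSeries {U : Set σ} (hU : IsUpperSet U) {T : Finset σ}
    (hT : ↑T = standardIndices m ∩ U) :
    ∃ s : CompositionSeries (Ideal R), s.head = ⊥ ∧ s.last = Ideal.span (m '' U) ∧
      s.length = T.card := by
  refine IsUpperSet.induction_of_finite (P := fun U => ∀ T : Finset σ,
    ↑T = standardIndices m ∩ U → ∃ s : CompositionSeries (Ideal R), s.head = ⊥ ∧
      s.last = Ideal.span (m '' U) ∧ s.length = T.card)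
    (finite_standardIndices hfin) ?_ ?_ hU T hT
  · intro U hU hΔU T hT
    rw [hΔU, Finset.coe_eq_empty] at hT
    exact ⟨RelSeries.singleton _ ⊥, rfl, (span_image_eq_bot hfin hU hΔU).symm, by simp [hT]⟩
  · intro U δ hU hδ ih T hT
    obtain ⟨s, hhead, hlast, hlen⟩ := ih (T.erase δ) (Finset.coe_erase_of_isLeast hU hT hδ)
    have hδT : δ ∈ T := by rw [← Finset.mem_coe, hT]; exact hδ.1
    have hcov : s.last ⋖ Ideal.span (m '' U) := by
      rw [hlast, span_image_eq_span_image_Ici hfin hU hδ]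
      exact span_image_Ioi_covBy_Ici hmul hδ.1.1
    refine ⟨s.snoc _ hcov, by rw [RelSeries.head_snoc, hhead], RelSeries.last_snoc _ _ _, ?_⟩
    rw [RelSeries.snoc_length, hlen, Finset.card_erase_add_one hδT]

theorem length_eq_card_standardIndices (hspan : Ideal.span (range m) = ⊤) {T : Finset σ}
    (hT : ↑T = standardIndices m) : Module.length R R = T.card := by
  obtain ⟨s, hhead, hlast, hlen⟩ :=
    exists_compositionSeries hfin hmul isUpperSet_univ (T := T) (by rw [hT, inter_univ])
  rw [← hlen, Module.length_compositionSeries s hhead (by rw [hlast, image_univ, hspan])]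

end StandardIndices

/-- `ℕ^μ` with `mo` as its order instance: on `Fin μ → ℕ` itself, `<` and `Ioi` refer to the
pointwise order. -/
def MonomialExponent (μ : ℕ) (_ : LinearOrder (Fin μ → ℕ)) : Type := Fin μ → ℕ

instance (μ : ℕ) (mo : LinearOrder (Fin μ → ℕ)) : LinearOrder (MonomialExponent μ mo) := mo

section Monomials

variable {R : Type*} [CommRing R] {μ : ℕ}

theorem finite_support_prod_pow {x : Fin μ → R} (hx : ∀ i, IsNilpotent (x i)) :
    (Function.support fun α : Fin μ → ℕ => ∏ i, x i ^ α i).Finite := by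
  choose n hn using hx
  refine (Set.Finite.pi fun i => finite_Iio (n i)).subset fun α hα i _ => ?_
  by_contra h
  exact hα (Finset.prod_eq_zero (Finset.mem_univ i) (pow_eq_zero_of_le (not_lt.1 h) (hn i)))

theorem monomialOrder_lt_add {mo : LinearOrder (Fin μ → ℕ)} (h0 : ∀ α, mo.le 0 α)
    (hadd : ∀ α β γ : Fin μ → ℕ, mo.le α β → mo.le (α + γ) (β + γ)) (α : Fin μ → ℕ)
    {γ : Fin μ → ℕ} (hγ : γ ≠ 0) : mo.lt α (α + γ) := by
  have hle : mo.le α (α + γ) := by simpa [add_comm] using hadd 0 γ α (h0 γ)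
  exact @lt_of_le_of_ne _ mo.toPartialOrder _ _ hle fun h => hγ (left_eq_add.1 h)

theorem mul_prod_pow_mem_monIdeal (x : Fin μ → R) {mo : LinearOrder (Fin μ → ℕ)}
    (h0 : ∀ α, mo.le 0 α) (hadd : ∀ α β γ : Fin μ → ℕ, mo.le α β → mo.le (α + γ) (β + γ))
    (α : Fin μ → ℕ) {c : R} (hc : c ∈ Ideal.span (range x)) :
    c * ∏ i, x i ^ α i ∈ monIdeal x mo α := by
  induction hc using Submodule.span_induction with
  | mem _ hy =>
    obtain ⟨i, rfl⟩ := hy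
    refine Ideal.subset_span ⟨α + Pi.single i 1, monomialOrder_lt_add h0 hadd α ?_, ?_⟩
    · exact (Pi.single_ne_zero_iff (i := i)).2 one_ne_zero
    · simp only [Pi.add_apply, pow_add, Finset.prod_mul_distrib, Pi.single_apply, pow_ite,
        pow_one, pow_zero, Finset.prod_ite_eq', Finset.mem_univ, if_true, mul_comm]
  | zero => rw [zero_mul]; exact zero_mem _
  | add _ _ _ _ h₁ h₂ => rw [add_mul]; exact add_mem h₁ h₂
  | smul a _ _ h => rw [smul_eq_mul, mul_assoc]; exact Ideal.mul_mem_left _ a h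

theorem monIdeal_eq_span_image_Ioi (x : Fin μ → R) {mo : LinearOrder (Fin μ → ℕ)}
    (α : Fin μ → ℕ) :
    monIdeal x mo α = Ideal.span ((fun β : MonomialExponent μ mo => ∏ i, x i ^ β i) '' Ioi α) :=
  congrArg Ideal.span <| Set.ext fun _ =>
    ⟨fun ⟨β, hβ, hr⟩ => ⟨β, hβ, hr.symm⟩, fun ⟨β, hβ, hr⟩ => ⟨β, hβ, hr.symm⟩⟩

theorem monDelta_eq_standardIndices (x : Fin μ → R) (mo : LinearOrder (Fin μ → ℕ)) :
    monDelta x mo = standardIndices fun β : MonomialExponent μ mo => ∏ i, x i ^ β i :=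
  Set.ext fun α => not_congr (SetLike.ext_iff.1 (monIdeal_eq_span_image_Ioi x α) _)

end Monomials

section ResidueField

variable {R : Type*} [CommRing R] [IsLocalRing R]

theorem exists_sub_pow_mem_maximalIdeal [IsAlgClosed (ResidueField R)] {q : ℕ} (hq : q ≠ 0)
    (c : R) : ∃ a, c - a ^ q ∈ maximalIdeal R := by
  obtain ⟨z, hz⟩ := IsAlgClosed.exists_pow_nat_eq (residue R c) (Nat.pos_of_ne_zero hq)
  obtain ⟨a, rfl⟩ := residue_surjective z
  exact ⟨a, (residue_eq_zero_iff _).1 (by rw [map_sub, map_pow, hz, sub_self])⟩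

theorem pow_eq_pow_of_sub_mem_maximalIdeal {p : ℕ} (hp : p.Prime) [CharP (ResidueField R) p]
    {N : ℕ} (hcong : ∀ a b : R, a - b ∈ maximalIdeal R → a ^ p ^ N = b ^ p ^ N) {a b : R}
    (h : a ^ p ^ N - b ^ p ^ N ∈ maximalIdeal R) : a ^ p ^ N = b ^ p ^ N := by
  have := ExpChar.prime (R := ResidueField R) hp
  have hres : residue R a = residue R b := by
    refine iterateFrobenius_inj (ResidueField R) p N ?_
    rw [iterateFrobenius_def, iterateFrobenius_def, ← map_pow, ← map_pow, ← sub_eq_zero,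
      ← map_sub, residue_eq_zero_iff]
    exact h
  exact hcong a b (by rw [← residue_eq_zero_iff, map_sub, hres, sub_self])

end ResidueField

theorem stmt_16_general (R : Type u) [CommRing R] [IsArtinianRing R] [IsLocalRing R]
    (p : ℕ) (hp : p.Prime) [CharP (ResidueField R) p]
    [IsAlgClosed (ResidueField R)]
    (N q : ℕ) (hq : q = p ^ N)
    (hcong : ∀ a b : R, a - b ∈ maximalIdeal R ↔ a ^ q = b ^ q)
    (μ : ℕ) (x : Fin μ → R)
    (hgen : Ideal.span (Set.range x) = maximalIdeal R)
    (mo : LinearOrder (Fin μ → ℕ))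
    (h0 : ∀ α, mo.le 0 α)
    (hadd : ∀ α β γ : Fin μ → ℕ, mo.le α β → mo.le (α + γ) (β + γ)) :
    ∃ Δfin : Finset (Fin μ → ℕ), (Δfin : Set (Fin μ → ℕ)) = monDelta x mo ∧
      (∀ r : R, ∃ a : (Fin μ → ℕ) → R,
        r = ∑ α ∈ Δfin, a α ^ q * ∏ i, x i ^ α i) ∧
      (∀ a b : (Fin μ → ℕ) → R,
        (∑ α ∈ Δfin, a α ^ q * ∏ i, x i ^ α i) = (∑ α ∈ Δfin, b α ^ q * ∏ i, x i ^ α i) →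
        ∀ α ∈ Δfin, a α ^ q = b α ^ q) ∧
      (∀ α ∈ Δfin, ∀ β ∈ Δfin, mo.lt α β → monIdeal x mo β < monIdeal x mo α) ∧
      (∀ α ∈ Δfin, ∀ β ∈ Δfin, mo.lt α β →
        (∀ γ ∈ Δfin, ¬(mo.lt α γ ∧ mo.lt γ β)) → monIdeal x mo β ⋖ monIdeal x mo α) ∧
      ((Δfin.card : ℕ∞) : WithBot ℕ∞) = ringLength R := by
  subst hq
  set m : MonomialExponent μ mo → R := fun α => ∏ i, x i ^ α i
  have hfin : (Function.support m).Finite := finite_support_prod_pow fun i =>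
    Ring.KrullDimLE.isNilpotent_iff_mem_maximalIdeal.2 (hgen ▸ Ideal.subset_span ⟨i, rfl⟩)
  have hmul (α : MonomialExponent μ mo) (c : R) (hc : c ∈ maximalIdeal R) :
      c * m α ∈ Ideal.span (m '' Ioi α) :=
    (SetLike.ext_iff.1 (monIdeal_eq_span_image_Ioi x α) _).1
      (mul_prod_pow_mem_monIdeal x h0 hadd α (hgen ▸ hc))
  have hspan : Ideal.span (range m) = ⊤ :=
    (Ideal.eq_top_iff_one _).2 (Ideal.subset_span ⟨(0 : Fin μ → ℕ), by simp [m]⟩)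
  obtain ⟨T, hT⟩ := (finite_standardIndices hfin).exists_finset_coe
  have hTΔ (α : MonomialExponent μ mo) : α ∈ T ↔ α ∈ standardIndices m := by
    rw [← Finset.mem_coe, hT]
  refine ⟨T, hT.trans (monDelta_eq_standardIndices x mo).symm, fun r => ?_,
    fun a b hab α hα => ?_, fun α _ β hβ hlt => ?_, fun α _ β hβ hlt hbetween => ?_, ?_⟩
  · exact exists_sum_eq hfin hmul hspan
      (exists_sub_pow_mem_maximalIdeal (pow_ne_zero N hp.ne_zero)) hT r
  · exact apply_eq_of_sum_eq_sum (m := m) (f := (· ^ p ^ N))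
      (fun _ _ => pow_eq_pow_of_sub_mem_maximalIdeal hp fun a b => (hcong a b).1) T hT.subset
      hab α hα
  · rw [monIdeal_eq_span_image_Ioi, monIdeal_eq_span_image_Ioi]
    exact span_image_Ioi_lt_of_mem_standardIndices ((hTΔ β).1 hβ) hlt
  · rw [monIdeal_eq_span_image_Ioi, monIdeal_eq_span_image_Ioi]
    exact span_image_Ioi_covBy hfin hmul ((hTΔ β).1 hβ) hlt fun γ hγ => hbetween γ ((hTΔ γ).2 hγ)
  · rw [ringLength, ← Module.coe_length, length_eq_card_standardIndices hfin hmul hspan hT]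
    rfl

/-- Let `(R, 𝔪)` be an Artinian local ring of mixed characteristic with algebraically closed
residue field of characteristic `p`, and let `q = p^N` with `N` sufficiently large (`q = 0` in
`R`, congruence mod `𝔪` is equivalence of `q`-th powers). Fix a minimal system of generators
`x` of `𝔪` and a monomial ordering. Then: (1) every `r ∈ R` is `Σ_{α ∈ Δ} a_α^q x^α` with the
Witt-vector coefficients `a_α^q` uniquely determined (the monomials `x^α`, `α ∈ Δ_R`, form a
Witt base); (2) the ideals `𝔞(α)`, `α ∈ Δ_R`, from the largest to the smallest index, form a
maximal strictly ascending chain of ideals, so `#Δ_R = ℓ(R)`. -/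
theorem stmt_16 (R : Type u) [CommRing R] [IsArtinianRing R] [IsLocalRing R]
    (p : ℕ) (hp : p.Prime) [CharP (ResidueField R) p] (hmix : (p : R) ≠ 0)
    [IsAlgClosed (ResidueField R)]
    (N q : ℕ) (hq : q = p ^ N)
    (hq0 : ((q : ℕ) : R) = 0)
    (hcong : ∀ a b : R, a - b ∈ maximalIdeal R ↔ a ^ q = b ^ q)
    (μ : ℕ) (x : Fin μ → R)
    (hgen : Ideal.span (Set.range x) = maximalIdeal R)
    (hmin : ∀ i, x i ∉ Ideal.span (x '' {j | j ≠ i}))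
    (mo : LinearOrder (Fin μ → ℕ))
    (h0 : ∀ α, mo.le 0 α)
    (hadd : ∀ α β γ : Fin μ → ℕ, mo.le α β → mo.le (α + γ) (β + γ)) :
    ∃ Δfin : Finset (Fin μ → ℕ), (Δfin : Set (Fin μ → ℕ)) = monDelta x mo ∧
      (∀ r : R, ∃ a : (Fin μ → ℕ) → R,
        r = ∑ α ∈ Δfin, a α ^ q * ∏ i, x i ^ α i) ∧
      (∀ a b : (Fin μ → ℕ) → R,
        (∑ α ∈ Δfin, a α ^ q * ∏ i, x i ^ α i) = (∑ α ∈ Δfin, b α ^ q * ∏ i, x i ^ α i) →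
        ∀ α ∈ Δfin, a α ^ q = b α ^ q) ∧
      (∀ α ∈ Δfin, ∀ β ∈ Δfin, mo.lt α β → monIdeal x mo β < monIdeal x mo α) ∧
      (∀ α ∈ Δfin, ∀ β ∈ Δfin, mo.lt α β →
        (∀ γ ∈ Δfin, ¬(mo.lt α γ ∧ mo.lt γ β)) → monIdeal x mo β ⋖ monIdeal x mo α) ∧
      ((Δfin.card : ℕ∞) : WithBot ℕ∞) = ringLength R :=
  stmt_16_general R p hp N q hq hcong μ x hgen mo h0 hadd
end
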